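/- With 𝒫 as in the block formula, for all x, y, u, v ∈ S² the Frobenius distance satisfies ‖𝒫(x,y) − 𝒫(u,v)‖_F = ‖xyᵀ − uvᵀ‖_F, i.e., 𝒫 is distance preserving from rank-one matrices to Grassmannian projections. -/

import Mathlib

/-! The Frobenius inner product of two values of `𝒫` is an affine function of that of the
corresponding rank-one matrices: `⟨𝒫(x,y), 𝒫(u,v)⟩_F = 1 + ⟨xyᵀ, uvᵀ⟩_F = 1 + (x·u)(y·v)`.
Expanding `‖A - B‖_F² = ‖A‖_F² + ‖B‖_F² - 2⟨A, B⟩_F` on both sides, the constants cancel. -/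

open Matrix

/-- The parametrization `𝒫 : S² × S² → ℝ^{4×4}` given in block form by
`𝒫(x,y) = (1/2)[[1 + xᵀy, -(x×y)ᵀ],[-(x×y), xyᵀ + yxᵀ + (1-xᵀy)I₃]]`. -/
noncomputable def Pmat (x y : Fin 3 → ℝ) : Matrix (Fin 4) (Fin 4) ℝ :=
  let d : ℝ := x 0 * y 0 + x 1 * y 1 + x 2 * y 2
  let c : Fin 3 → ℝ :=
    ![x 1 * y 2 - x 2 * y 1, x 2 * y 0 - x 0 * y 2, x 0 * y 1 - x 1 * y 0]
  (1 / 2 : ℝ) •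
    !![1 + d, -c 0, -c 1, -c 2;
       -c 0, x 0 * y 0 + y 0 * x 0 + (1 - d), x 0 * y 1 + y 0 * x 1, x 0 * y 2 + y 0 * x 2;
       -c 1, x 1 * y 0 + y 1 * x 0, x 1 * y 1 + y 1 * x 1 + (1 - d), x 1 * y 2 + y 1 * x 2;
       -c 2, x 2 * y 0 + y 2 * x 0, x 2 * y 1 + y 2 * x 1, x 2 * y 2 + y 2 * x 2 + (1 - d)]

/-- The outer product `xyᵀ ∈ ℝ^{3×3}`. -/
noncomputable def outer (x y : Fin 3 → ℝ) : Matrix (Fin 3) (Fin 3) ℝ :=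
  Matrix.of fun i j => x i * y j

theorem Matrix.trace_transpose_sub_mul_sub {m n R : Type*} [Fintype m] [Fintype n] [CommRing R]
    (A B : Matrix m n R) :
    trace ((A - B)ᵀ * (A - B)) = trace (Aᵀ * A) + trace (Bᵀ * B) - 2 * trace (Aᵀ * B) := by
  have hBA : trace (Bᵀ * A) = trace (Aᵀ * B) := by
    rw [← trace_transpose, transpose_mul, transpose_transpose]
  rw [transpose_sub, Matrix.sub_mul, Matrix.mul_sub, Matrix.mul_sub, trace_sub, trace_sub,
    trace_sub, hBA]
  ring

theorem trace_transpose_outer_mul_outer (x y u v : Fin 3 → ℝ) :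
    trace ((outer x y)ᵀ * outer u v) = (x ⬝ᵥ u) * (y ⬝ᵥ v) := by
  simp only [outer, trace, diag, mul_apply, transpose_apply, of_apply, dotProduct,
    Fin.sum_univ_three]
  ring

theorem trace_transpose_Pmat_mul_Pmat (x y u v : Fin 3 → ℝ) :
    trace ((Pmat x y)ᵀ * Pmat u v) = 1 + (x ⬝ᵥ u) * (y ⬝ᵥ v) := by
  simp only [Pmat, trace, diag, mul_apply, transpose_apply, Matrix.smul_apply, of_apply,
    dotProduct, Fin.sum_univ_succ, Fin.sum_univ_zero, cons_val', cons_val_zero, cons_val_one,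
    cons_val_two, cons_val_succ, cons_val_fin_one, head_cons, tail_cons, empty_val', smul_eq_mul,
    Fin.succ_zero_eq_one, Fin.succ_one_eq_two]
  ring

theorem Pmat_frobenius_isometry_general (x y u v : Fin 3 → ℝ) :
    Real.sqrt (Matrix.trace ((Pmat x y - Pmat u v)ᵀ * (Pmat x y - Pmat u v))) =
    Real.sqrt (Matrix.trace ((outer x y - outer u v)ᵀ * (outer x y - outer u v))) := by
  congr 1
  simp only [trace_transpose_sub_mul_sub, trace_transpose_Pmat_mul_Pmat,
    trace_transpose_outer_mul_outer]
  ring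

/-- `𝒫` is distance preserving with respect to the Frobenius norm:
`‖𝒫(x,y) - 𝒫(u,v)‖_F = ‖xyᵀ - uvᵀ‖_F` for unit vectors `x, y, u, v ∈ S²`. -/
theorem Pmat_frobenius_isometry (x y u v : Fin 3 → ℝ)
    (hx : x 0 ^ 2 + x 1 ^ 2 + x 2 ^ 2 = 1) (hy : y 0 ^ 2 + y 1 ^ 2 + y 2 ^ 2 = 1)
    (hu : u 0 ^ 2 + u 1 ^ 2 + u 2 ^ 2 = 1) (hv : v 0 ^ 2 + v 1 ^ 2 + v 2 ^ 2 = 1) :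
    Real.sqrt (Matrix.trace ((Pmat x y - Pmat u v)ᵀ * (Pmat x y - Pmat u v))) =
    Real.sqrt (Matrix.trace ((outer x y - outer u v)ᵀ * (outer x y - outer u v))) :=
  Pmat_frobenius_isometry_general x y u v
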